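/- arXiv:1701.07463 — 3 statements merged into one kernel-verified Lean document; each statement's English description precedes it below -/
import Mathlib

section
/- Let H be a graph (loops allowed). There exists a full lc-sequence for H if and only if every connected component of H containing no looped vertex consists of a single isolated vertex. -/
open Matrix

variable {V : Type*} [Fintype V] [DecidableEq V]

/-- The adjacency relation of a graph given by its GF(2) adjacency matrix. -/
def adjRel {W : Type*} (B : Matrix W W (ZMod 2)) (u w : W) : Prop :=
  u ≠ w ∧ B u w = 1

/-- The adjacency matrix of `H *_c v`: complement the induced subgraph on the
closed neighborhood of the looped vertex `v` (including loop statuses of the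
neighbors of `v`) and remove all edges incident to `v`, including its loop. -/
def lccMat (A : Matrix V V (ZMod 2)) (v : V) : Matrix V V (ZMod 2) :=
  fun x y => if x = v ∨ y = v then 0 else A x y + A x v * A v y

/-- Applicability of a sequence of `*_c` operations: each vertex is looped in the
current graph. -/
def IsLcSeq (A : Matrix V V (ZMod 2)) : List V → Prop
  | [] => True
  | v :: rest => A v v = 1 ∧ IsLcSeq (lccMat A v) rest

/-!
A set of vertices closed under adjacency and containing no looped vertex is never touched by
an lc-operation: its vertices cannot be pivots, and they are not adjacent to any pivot. So if a
full lc-sequence exists, every such set consists of isolated vertices; for connected components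
this is the condition of the theorem.

Conversely, as long as the graph has a looped vertex, pivot at a looped vertex `v` with the most
loopless neighbours and, among those, the fewest looped ones. If this created a closed loopless
set `C` carrying an edge, some `u ∈ C` was adjacent to `v` (otherwise `C` was already closed and
loopless before); `u` was looped, its row agrees with that of `v` outside `C ∪ {v}`, and a
neighbour `t ∈ C` of `u` after the pivot shows that `u` has strictly more loopless neighbours than
`v`, or as many loopless and strictly fewer looped ones. Each pivot isolates a new vertex, so this
terminates, and at the end the graph has no loops, hence no edges.
-/

open Relation

lemma zmod_two_eq_one_of_ne_zero {a : ZMod 2} (h : a ≠ 0) : a = 1 := by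
  decide +revert

lemma zmod_two_eq_zero_of_ne_one {a : ZMod 2} (h : a ≠ 1) : a = 0 := by
  decide +revert

section LocalComplementation

omit [Fintype V]

@[simp]
lemma lccMat_apply_self_left (A : Matrix V V (ZMod 2)) (v y : V) : lccMat A v v y = 0 := by
  simp [lccMat]

@[simp]
lemma lccMat_apply_self_right (A : Matrix V V (ZMod 2)) (v x : V) : lccMat A v x v = 0 := by
  simp [lccMat]

lemma lccMat_apply_of_ne (A : Matrix V V (ZMod 2)) {v x y : V} (hx : x ≠ v) (hy : y ≠ v) :
    lccMat A v x y = A x y + A x v * A v y := by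
  simp [lccMat, hx, hy]

lemma lccMat_isSymm {A : Matrix V V (ZMod 2)} (hA : A.IsSymm) (v : V) :
    (lccMat A v).IsSymm := by
  ext x y
  simp only [transpose_apply, lccMat, or_comm (a := y = v)]
  split
  · rfl
  · rw [hA.apply, hA.apply x v, hA.apply v y, mul_comm]

lemma lccMat_apply_diag {A : Matrix V V (ZMod 2)} (hA : A.IsSymm) {v z : V} (hz : z ≠ v) :
    lccMat A v z z = A z z + A z v := by
  have hidem : ∀ a : ZMod 2, a * a = a := by decide
  rw [lccMat_apply_of_ne A hz hz, hA.apply v z, hidem]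

lemma lccMat_apply_of_adj_pivot {A : Matrix V V (ZMod 2)} {v u y : V} (hu : u ≠ v) (hy : y ≠ v)
    (hadj : A u v = 1) : lccMat A v u y = A u y + A v y := by
  rw [lccMat_apply_of_ne A hu hy, hadj, one_mul]

lemma lccMat_row_eq_of_not_adj_pivot {A : Matrix V V (ZMod 2)} {v z : V} (hz : z ≠ v)
    (hzv : A z v = 0) : lccMat A v z = A z := by
  funext y
  by_cases hy : y = v
  · subst hy
    rw [lccMat_apply_self_right, hzv]
  · rw [lccMat_apply_of_ne A hz hy, hzv, zero_mul, add_zero]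

lemma lccMat_row_eq_zero {A : Matrix V V (ZMod 2)} (v : V) {x : V} (hx : A x = 0) :
    lccMat A v x = 0 := by
  funext y
  simp [lccMat, congrFun hx]

def nonIsolated (A : Matrix V V (ZMod 2)) : Set V := {x | ∃ y, A x y ≠ 0}

lemma nonIsolated_lccMat_ssubset {A : Matrix V V (ZMod 2)} {v : V} (hv : A v v = 1) :
    nonIsolated (lccMat A v) ⊂ nonIsolated A := by
  refine (Set.ssubset_iff_of_subset fun x hx => ?_).mpr
    ⟨v, ⟨v, by simp [hv]⟩, by simp [nonIsolated]⟩
  simp only [nonIsolated, Set.mem_ofPred_eq] at hx ⊢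
  by_contra! h
  obtain ⟨y, hy⟩ := hx
  exact hy (congrFun (lccMat_row_eq_zero v (funext h)) y)

/-- An isolated vertex stays isolated, so it can never be a pivot. -/
lemma IsLcSeq.not_mem_of_row_eq_zero {A : Matrix V V (ZMod 2)} {σ : List V} (hσ : IsLcSeq A σ)
    {x : V} (hx : A x = 0) : x ∉ σ := by
  induction σ generalizing A with
  | nil => exact List.not_mem_nil
  | cons v σ ih =>
    obtain ⟨hv, hσ⟩ := hσ
    rintro (_ | ⟨_, hxσ⟩)
    · simp [hx] at hv
    · exact ih hσ (lccMat_row_eq_zero v hx) hxσ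

lemma IsLcSeq.nodup {A : Matrix V V (ZMod 2)} {σ : List V} (hσ : IsLcSeq A σ) : σ.Nodup := by
  induction σ generalizing A with
  | nil => exact List.nodup_nil
  | cons v σ ih =>
    obtain ⟨-, hσ⟩ := hσ
    exact List.nodup_cons.mpr
      ⟨hσ.not_mem_of_row_eq_zero (funext (lccMat_apply_self_left A v)), ih hσ⟩

end LocalComplementation

section ClosedSets

def IsAdjClosed {W : Type*} (A : Matrix W W (ZMod 2)) (S : Set W) : Prop :=
  ∀ x ∈ S, ∀ y, A x y = 1 → y ∈ S

def LooplessClosedIsolated {W : Type*} (A : Matrix W W (ZMod 2)) : Prop :=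
  ∀ S : Set W, IsAdjClosed A S → (∀ x ∈ S, A x x = 0) → ∀ x ∈ S, A x = 0

variable {W : Type*} {A : Matrix W W (ZMod 2)}

lemma IsAdjClosed.mem_of_reflTransGen {S : Set W} (hS : IsAdjClosed A S) {x y : W} (hx : x ∈ S)
    (hxy : ReflTransGen (adjRel A) x y) : y ∈ S := by
  induction hxy with
  | refl => exact hx
  | tail _ hbc ih => exact hS _ ih _ hbc.2

lemma isAdjClosed_reflTransGen (A : Matrix W W (ZMod 2)) (x : W) :
    IsAdjClosed A {y | ReflTransGen (adjRel A) x y} := by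
  intro z hz y hzy
  by_cases h : z = y
  · exact h ▸ hz
  · exact ReflTransGen.tail hz ⟨h, hzy⟩

lemma IsAdjClosed.sep_row_ne_zero (hA : A.IsSymm) {S : Set W} (hS : IsAdjClosed A S) :
    IsAdjClosed A {z ∈ S | A z ≠ 0} := by
  rintro z ⟨hz, -⟩ y hzy
  refine ⟨hS z hz y hzy, fun hy => ?_⟩
  simpa [hA.apply, hzy] using congrFun hy z

lemma IsAdjClosed.of_row_eq {B : Matrix W W (ZMod 2)} {S : Set W} (hS : IsAdjClosed A S)
    (h : ∀ x ∈ S, B x = A x) : IsAdjClosed B S :=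
  fun x hx y hxy => hS x hx y (h x hx ▸ hxy)

lemma looplessClosedIsolated_iff (A : Matrix W W (ZMod 2)) :
    LooplessClosedIsolated A ↔
      ∀ (C : Set W) (w₀ : W), C = {y | ReflTransGen (adjRel A) w₀ y} →
        (∀ x ∈ C, A x x = 0) → ∃ u, C = {u} ∧ ∀ y, A u y = 0 := by
  constructor
  · rintro hI C w₀ rfl hC
    have hrow := hI _ (isAdjClosed_reflTransGen A w₀) hC
    refine ⟨w₀, Set.eq_singleton_iff_unique_mem.mpr ⟨ReflTransGen.refl, fun z hz => ?_⟩,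
      congrFun (hrow w₀ ReflTransGen.refl)⟩
    rcases hz.cases_head with h | ⟨c, hc, -⟩
    · exact h.symm
    · simpa [hrow w₀ ReflTransGen.refl] using hc.2
  · intro hC S hS hSl x hx
    obtain ⟨u, hu, hu0⟩ := hC _ x rfl fun z hz => hSl z (hS.mem_of_reflTransGen hx hz)
    have hxu : x ∈ ({u} : Set W) := hu ▸ ReflTransGen.refl
    obtain rfl := hxu
    exact funext hu0

end ClosedSets

section Necessity

omit [Fintype V]

lemma lccMat_row_eq_of_isAdjClosed {B : Matrix V V (ZMod 2)} {S : Set V} (hS : IsAdjClosed B S)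
    (hSl : ∀ x ∈ S, B x x = 0) {v : V} (hv : B v v = 1) {x : V} (hx : x ∈ S) :
    lccMat B v x = B x := by
  have hvS : v ∉ S := fun h => by simp [hSl v h] at hv
  refine lccMat_row_eq_of_not_adj_pivot (fun h => hvS (h ▸ hx)) ?_
  by_contra hxv
  exact hvS (hS x hx v (zmod_two_eq_one_of_ne_zero hxv))

lemma IsLcSeq.foldl_row_eq_of_isAdjClosed {B : Matrix V V (ZMod 2)} {σ : List V}
    (hσ : IsLcSeq B σ) {S : Set V} (hS : IsAdjClosed B S) (hSl : ∀ x ∈ S, B x x = 0) {x : V}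
    (hx : x ∈ S) : σ.foldl lccMat B x = B x := by
  induction σ generalizing B with
  | nil => rfl
  | cons v σ ih =>
    obtain ⟨hv, hσ⟩ := hσ
    have hrow : ∀ z ∈ S, lccMat B v z = B z := fun z hz =>
      lccMat_row_eq_of_isAdjClosed hS hSl hv hz
    rw [List.foldl_cons, ← hrow x hx]
    exact ih hσ (hS.of_row_eq hrow) fun z hz => hrow z hz ▸ hSl z hz

lemma looplessClosedIsolated_of_isLcSeq {A : Matrix V V (ZMod 2)} {σ : List V}
    (hσ : IsLcSeq A σ) (hfull : σ.foldl lccMat A = 0) : LooplessClosedIsolated A :=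
  fun _ hS hSl _ hx => by rw [← hσ.foldl_row_eq_of_isAdjClosed hS hSl hx, hfull]; rfl

end Necessity

section PivotNeighbourhood

omit [Fintype V]

variable {A : Matrix V V (ZMod 2)} {v : V} {C : Set V}

lemma adj_pivot_eq_loop_of_mem (hA : A.IsSymm) (hCl : ∀ z ∈ C, lccMat A v z z = 0) {z : V}
    (hz : z ∈ C) (hzv : z ≠ v) : A v z = A z z := by
  have h := hCl z hz
  rw [lccMat_apply_diag hA hzv, CharTwo.add_eq_zero] at h
  rw [hA.apply z v, h]

lemma adj_eq_adj_pivot_of_not_mem (hC : IsAdjClosed (lccMat A v) C) {u y : V} (hu : u ∈ C)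
    (huv : u ≠ v) (hadj : A u v = 1) (hy : y ∉ C) (hyv : y ≠ v) : A u y = A v y := by
  have h : lccMat A v u y ≠ 1 := fun h => hy (hC u hu y h)
  rw [lccMat_apply_of_adj_pivot huv hyv hadj] at h
  exact CharTwo.add_eq_zero.mp (zmod_two_eq_zero_of_ne_one h)

lemma exists_mem_adj_pivot (hv : A v v = 1) (hI : LooplessClosedIsolated A)
    (hC : IsAdjClosed (lccMat A v) C) (hCl : ∀ z ∈ C, lccMat A v z z = 0) {z₀ : V}
    (hz₀ : z₀ ∈ C) (hrow : lccMat A v z₀ ≠ 0) : ∃ u ∈ C, A u v = 1 := by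
  by_contra! h
  have hrows : ∀ z ∈ C, lccMat A v z = A z := fun z hz => by
    have hzv := zmod_two_eq_zero_of_ne_one (h z hz)
    exact lccMat_row_eq_of_not_adj_pivot (by rintro rfl; simp [hzv] at hv) hzv
  have hCA : IsAdjClosed A C := hC.of_row_eq fun z hz => (hrows z hz).symm
  exact hrow ((hrows z₀ hz₀).trans (hI C hCA (fun z hz => hrows z hz ▸ hCl z hz) z₀ hz₀))

end PivotNeighbourhood

section PivotScore

omit [DecidableEq V]

def looplessNbrs (A : Matrix V V (ZMod 2)) (w : V) : Finset V := {y | A w y = 1 ∧ A y y = 0}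

def loopedNbrs (A : Matrix V V (ZMod 2)) (w : V) : Finset V := {y | A w y = 1 ∧ A y y = 1}

def pivotScore (A : Matrix V V (ZMod 2)) (w : V) : ℕ ×ₗ ℕᵒᵈ :=
  toLex ((looplessNbrs A w).card, OrderDual.toDual (loopedNbrs A w).card)

lemma pivotScore_lt {A : Matrix V V (ZMod 2)} {u v : V}
    (hL : looplessNbrs A v ⊆ looplessNbrs A u)
    (h : looplessNbrs A v ⊂ looplessNbrs A u ∨ loopedNbrs A u ⊂ loopedNbrs A v) :
    pivotScore A v < pivotScore A u := by
  rw [pivotScore, pivotScore, Prod.Lex.toLex_lt_toLex]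
  rcases h with h | h
  · exact Or.inl (Finset.card_lt_card h)
  · rcases (Finset.card_le_card hL).lt_or_eq with h' | h'
    · exact Or.inl h'
    · exact Or.inr ⟨h', Finset.card_lt_card h⟩

lemma exists_looped_forall_pivotScore_le {A : Matrix V V (ZMod 2)} (h : ∃ w, A w w = 1) :
    ∃ v, A v v = 1 ∧ ∀ u, A u u = 1 → pivotScore A u ≤ pivotScore A v := by
  obtain ⟨w, hw⟩ := h
  obtain ⟨v, hv, hmax⟩ :=
    Finset.exists_max_image ({u | A u u = 1} : Finset V) (pivotScore A) ⟨w, by simpa using hw⟩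
  exact ⟨v, by simpa using hv, fun u hu => hmax u (by simpa using hu)⟩

end PivotScore

section SafePivot

variable {A : Matrix V V (ZMod 2)} {v : V} {C : Set V}

lemma looplessNbrs_subset (hA : A.IsSymm) (hv : A v v = 1) (hC : IsAdjClosed (lccMat A v) C)
    (hCl : ∀ z ∈ C, lccMat A v z z = 0) {u : V} (hu : u ∈ C) (huv : u ≠ v)
    (hadj : A u v = 1) :
    looplessNbrs A v ⊆ looplessNbrs A u := by
  intro y hy
  simp only [looplessNbrs, Finset.mem_filter, Finset.mem_univ, true_and] at hy ⊢
  have hyv : y ≠ v := by rintro rfl; simp [hv] at hy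
  have hyC : y ∉ C := fun hyC => by
    simpa [hy.1, hy.2] using adj_pivot_eq_loop_of_mem hA hCl hyC hyv
  exact ⟨(adj_eq_adj_pivot_of_not_mem hC hu huv hadj hyC hyv).trans hy.1, hy.2⟩

lemma loopedNbrs_subset (hA : A.IsSymm) (hv : A v v = 1) (hC : IsAdjClosed (lccMat A v) C)
    (hCl : ∀ z ∈ C, lccMat A v z z = 0) {u : V} (hu : u ∈ C) (huv : u ≠ v)
    (hadj : A u v = 1) :
    loopedNbrs A u ⊆ loopedNbrs A v := by
  intro y hy
  simp only [loopedNbrs, Finset.mem_filter, Finset.mem_univ, true_and] at hy ⊢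
  refine ⟨?_, hy.2⟩
  by_cases hyv : y = v
  · exact hyv ▸ hv
  by_cases hyC : y ∈ C
  · exact (adj_pivot_eq_loop_of_mem hA hCl hyC hyv).trans hy.2
  · exact (adj_eq_adj_pivot_of_not_mem hC hu huv hadj hyC hyv).symm.trans hy.1

lemma exists_pivotScore_lt (hA : A.IsSymm) (hv : A v v = 1) (hI : LooplessClosedIsolated A)
    (hC : IsAdjClosed (lccMat A v) C) (hCl : ∀ z ∈ C, lccMat A v z z = 0) {z₀ : V}
    (hz₀ : z₀ ∈ C) (hrow : lccMat A v z₀ ≠ 0) :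
    ∃ u, A u u = 1 ∧ pivotScore A v < pivotScore A u := by
  -- Dropping the isolated vertices of `C` guarantees `u` below a neighbour `t`.
  set C' := {z ∈ C | lccMat A v z ≠ 0}
  have hC' : IsAdjClosed (lccMat A v) C' := hC.sep_row_ne_zero (lccMat_isSymm hA v)
  have hCl' : ∀ z ∈ C', lccMat A v z z = 0 := fun z hz => hCl z hz.1
  obtain ⟨u, hu, hadj⟩ := exists_mem_adj_pivot hv hI hC' hCl' ⟨hz₀, hrow⟩ hrow
  obtain ⟨t, ht⟩ : ∃ t, lccMat A v u t = 1 := by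
    by_contra! h
    exact hu.2 (funext fun t => zmod_two_eq_zero_of_ne_one (h t))
  have huv : u ≠ v := by rintro rfl; simp at ht
  have htv : t ≠ v := by rintro rfl; simp at ht
  have htC : t ∈ C' := hC' u hu t ht
  have hut : A u t + A v t = 1 := by rwa [lccMat_apply_of_adj_pivot huv htv hadj] at ht
  have htt : A v t = A t t := adj_pivot_eq_loop_of_mem hA hCl' htC htv
  have hL := looplessNbrs_subset hA hv hC' hCl' hu huv hadj
  refine ⟨u, (adj_pivot_eq_loop_of_mem hA hCl' hu huv).symm.trans (hA.apply u v ▸ hadj),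
    pivotScore_lt hL ?_⟩
  rcases eq_or_ne (A v t) 0 with hvt | hvt
  · have hut : A u t = 1 := by rwa [hvt, add_zero] at hut
    have htt : A t t = 0 := htt.symm.trans hvt
    refine Or.inl ((Finset.ssubset_iff_of_subset hL).mpr ⟨t, ?_, ?_⟩)
    · simp [looplessNbrs, hut, htt]
    · simp [looplessNbrs, hvt]
  · have hvt := zmod_two_eq_one_of_ne_zero hvt
    have hut : A u t = 0 := by simpa [hvt] using hut
    have htt : A t t = 1 := htt.symm.trans hvt
    have hK := loopedNbrs_subset hA hv hC' hCl' hu huv hadj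
    refine Or.inr ((Finset.ssubset_iff_of_subset hK).mpr ⟨t, ?_, ?_⟩)
    · simp [loopedNbrs, hvt, htt]
    · simp [loopedNbrs, hut]

lemma looplessClosedIsolated_lccMat (hA : A.IsSymm) (hI : LooplessClosedIsolated A)
    (hv : A v v = 1) (hmax : ∀ u, A u u = 1 → pivotScore A u ≤ pivotScore A v) :
    LooplessClosedIsolated (lccMat A v) := by
  intro S hS hSl x hx
  by_contra hrow
  obtain ⟨u, hu, hlt⟩ := exists_pivotScore_lt hA hv hI hS hSl hx hrow
  exact hlt.not_ge (hmax u hu)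

end SafePivot

lemma exists_isLcSeq_foldl_eq_zero {A : Matrix V V (ZMod 2)} (hA : A.IsSymm)
    (hI : LooplessClosedIsolated A) : ∃ σ : List V, IsLcSeq A σ ∧ σ.foldl lccMat A = 0 := by
  induction hn : (nonIsolated A).ncard using Nat.strong_induction_on generalizing A with
  | _ n ih =>
  by_cases hloop : ∃ w, A w w = 1
  · obtain ⟨v, hv, hmax⟩ := exists_looped_forall_pivotScore_le hloop
    have hlt : (nonIsolated (lccMat A v)).ncard < n :=
      hn ▸ Set.ncard_lt_ncard (nonIsolated_lccMat_ssubset hv) (Set.toFinite _)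
    obtain ⟨σ, hσ, hfull⟩ :=
      ih _ hlt (lccMat_isSymm hA v) (looplessClosedIsolated_lccMat hA hI hv hmax) rfl
    exact ⟨v :: σ, ⟨hv, hσ⟩, hfull⟩
  · push Not at hloop
    have hrow :=
      hI Set.univ (fun _ _ _ _ => trivial) fun x _ => zmod_two_eq_zero_of_ne_one (hloop x)
    exact ⟨[], trivial, funext fun x => hrow x trivial⟩

/-- Hannenhalli–Pevzner-type theorem for graphs: a graph `H` (loops allowed) admits
a full lc-sequence (a sequence of applicable `*_c` operations at mutually distinct
vertices resulting in a graph with only isolated vertices) if and only if every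
connected component of `H` containing no looped vertex consists of a single
isolated vertex. -/
theorem exists_full_lcSeq_iff (A : Matrix V V (ZMod 2)) (hA : A.IsSymm) :
    (∃ σ : List V, σ.Nodup ∧ IsLcSeq A σ ∧ σ.foldl lccMat A = 0) ↔
    (∀ (C : Set V) (w₀ : V), C = {y | Relation.ReflTransGen (adjRel A) w₀ y} →
      (∀ x ∈ C, A x x = 0) → ∃ u, C = {u} ∧ ∀ y, A u y = 0) := by
  rw [← looplessClosedIsolated_iff]
  constructor
  · rintro ⟨σ, -, hσ, hfull⟩
    exact looplessClosedIsolated_of_isLcSeq hσ hfull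
  · intro hI
    obtain ⟨σ, hσ, hfull⟩ := exists_isLcSeq_foldl_eq_zero hA hI
    exact ⟨σ, hσ.nodup, hσ, hfull⟩
end

section
/- Let H be a graph (loops allowed). For a subset X ⊆ V(H), the induced subgraph H[X] is a (possibly empty) union of connected components of H (i.e., no edge of H joins X to V(H)∖X) if and only if the delta-matroid D_H decomposes as a direct sum D₁ ⊕ D₂ with D₁ having ground set X and D₂ having ground set V(H)∖X. -/
open Matrix

variable {V : Type*} [Fintype V] [DecidableEq V] {U : Type*} [DecidableEq U]

/-- A set system: a finite ground set together with a family of subsets. -/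
structure SetSystem (U : Type*) [DecidableEq U] where
  ground : Finset U
  sets : Set (Finset U)

/-- The direct sum of two set systems (to be used with disjoint ground sets). -/
def SetSystem.directSum (D₁ D₂ : SetSystem U) : SetSystem U :=
  ⟨D₁.ground ∪ D₂.ground, {Z | ∃ X₁ ∈ D₁.sets, ∃ X₂ ∈ D₂.sets, Z = X₁ ∪ X₂}⟩

/-- The principal submatrix `A[X]` is invertible over GF(2). -/
def PrincInv (A : Matrix V V (ZMod 2)) (X : Finset V) : Prop :=
  IsUnit (A.submatrix (fun i : X => (i : V)) (fun i : X => (i : V))).det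

/-- The delta-matroid `D_H` of a graph `H` with GF(2) adjacency matrix `A`. -/
def DM (A : Matrix V V (ZMod 2)) : SetSystem V :=
  ⟨Finset.univ, {X | PrincInv A X}⟩

/-- Splitting the index set `Z` by intersection with `X`. -/
def splitEquiv (Z X : Finset V) : ({i // i ∈ Z ∩ X} ⊕ {i // i ∈ Z \ X}) ≃ {i // i ∈ Z} where
  toFun := Sum.elim (fun i => ⟨i, (Finset.mem_inter.mp i.2).1⟩)
    (fun i => ⟨i, (Finset.mem_sdiff.mp i.2).1⟩)
  invFun z := if h : (z : V) ∈ X then Sum.inl ⟨z, Finset.mem_inter.mpr ⟨z.2, h⟩⟩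
    else Sum.inr ⟨z, Finset.mem_sdiff.mpr ⟨z.2, h⟩⟩
  left_inv := by
    rintro (⟨i, hi⟩ | ⟨i, hi⟩)
    · simp [(Finset.mem_inter.mp hi).2]
    · simp [(Finset.mem_sdiff.mp hi).2]
  right_inv z := by
    by_cases h : (z : V) ∈ X <;> simp [h]

/-- Block-diagonal determinant splitting. -/
lemma det_princ_split (A : Matrix V V (ZMod 2)) (hA : A.IsSymm) (X : Finset V)
    (h0 : ∀ x ∈ X, ∀ y ∉ X, A x y = 0) (Z : Finset V) :
    (A.submatrix (fun i : Z => (i : V)) (fun i : Z => (i : V))).det =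
      (A.submatrix (fun i : (Z ∩ X : Finset V) => (i : V))
        (fun i : (Z ∩ X : Finset V) => (i : V))).det *
      (A.submatrix (fun i : (Z \ X : Finset V) => (i : V))
        (fun i : (Z \ X : Finset V) => (i : V))).det := by
  rw [← Matrix.det_submatrix_equiv_self (splitEquiv Z X)]
  have hM : (A.submatrix (fun i : Z => (i : V)) (fun i : Z => (i : V))).submatrix
      (splitEquiv Z X) (splitEquiv Z X) =
      Matrix.fromBlocks
        (A.submatrix (fun i : (Z ∩ X : Finset V) => (i : V))
          (fun i : (Z ∩ X : Finset V) => (i : V)))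
        (A.submatrix (fun i : (Z ∩ X : Finset V) => (i : V))
          (fun i : (Z \ X : Finset V) => (i : V)))
        0
        (A.submatrix (fun i : (Z \ X : Finset V) => (i : V))
          (fun i : (Z \ X : Finset V) => (i : V))) := by
    ext i j
    rcases i with i | i <;> rcases j with j | j
    · rfl
    · rfl
    · show A (i : V) (j : V) = 0
      have hiX : (i : V) ∉ X := (Finset.mem_sdiff.mp i.2).2
      have hjX : (j : V) ∈ X := (Finset.mem_inter.mp j.2).2
      have := h0 (j : V) hjX (i : V) hiX
      calc A (i : V) (j : V) = A.transpose (j : V) (i : V) := rfl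
        _ = A (j : V) (i : V) := by rw [hA]
        _ = 0 := this
    · rfl
  rw [hM, Matrix.det_fromBlocks_zero₂₁]

lemma princ_split (A : Matrix V V (ZMod 2)) (hA : A.IsSymm) (X : Finset V)
    (h0 : ∀ x ∈ X, ∀ y ∉ X, A x y = 0) (Z : Finset V) :
    PrincInv A Z ↔ PrincInv A (Z ∩ X) ∧ PrincInv A (Z \ X) := by
  unfold PrincInv
  rw [det_princ_split A hA X h0 Z]
  exact (Commute.all _ _).isUnit_mul_iff

lemma zmod2_unit_iff (a : ZMod 2) : IsUnit a ↔ a = 1 := by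
  rw [isUnit_iff_ne_zero]
  revert a; decide

lemma zmod2_ne_zero (a : ZMod 2) (h : a ≠ 0) : a = 1 := by revert h; revert a; decide

lemma zmod2_ne_one (a : ZMod 2) (h : a ≠ 1) : a = 0 := by revert h; revert a; decide

/-- Equiv from `Fin 1` to a singleton. -/
def singEquiv (x : V) : Fin 1 ≃ {i // i ∈ ({x} : Finset V)} where
  toFun _ := ⟨x, Finset.mem_singleton_self x⟩
  invFun _ := 0
  left_inv i := by omega
  right_inv z := by
    ext
    exact (Finset.mem_singleton.mp z.2).symm

lemma princ_singleton (A : Matrix V V (ZMod 2)) (x : V) :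
    PrincInv A {x} ↔ A x x = 1 := by
  unfold PrincInv
  rw [← Matrix.det_submatrix_equiv_self (singEquiv x), zmod2_unit_iff]
  simp [Matrix.det_fin_one, singEquiv]

/-- Equiv from `Fin 2` to a pair. -/
def pairEquiv (x y : V) (hxy : x ≠ y) : Fin 2 ≃ {i // i ∈ ({x, y} : Finset V)} where
  toFun i := if i = 0 then ⟨x, by simp⟩ else ⟨y, by simp⟩
  invFun z := if (z : V) = x then 0 else 1
  left_inv i := by
    fin_cases i
    · simp
    · simp [Ne.symm hxy]
  right_inv z := by
    dsimp only
    by_cases hzx : (z : V) = x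
    · rw [if_pos hzx, if_pos rfl]
      ext; exact hzx.symm
    · have hz : (z : V) = y := by
        rcases Finset.mem_insert.mp z.2 with h | h
        · exact absurd h hzx
        · exact Finset.mem_singleton.mp h
      rw [if_neg hzx, if_neg (by decide : ¬(1 : Fin 2) = 0)]
      ext; exact hz.symm
  
lemma princ_pair (A : Matrix V V (ZMod 2)) (x y : V) (hxy : x ≠ y) :
    PrincInv A {x, y} ↔ IsUnit (A x x * A y y - A x y * A y x) := by
  unfold PrincInv
  rw [← Matrix.det_submatrix_equiv_self (pairEquiv x y hxy)]
  have : ((A.submatrix (fun i : ({x, y} : Finset V) => (i : V))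
      (fun i : ({x, y} : Finset V) => (i : V))).submatrix (pairEquiv x y hxy)
      (pairEquiv x y hxy)).det = A x x * A y y - A x y * A y x := by
    rw [Matrix.det_fin_two]
    simp [pairEquiv]
  rw [this]

lemma princ_empty (A : Matrix V V (ZMod 2)) : PrincInv A (∅ : Finset V) := by
  unfold PrincInv
  rw [Matrix.det_isEmpty]
  exact isUnit_one

/-- For a graph `H` (loops allowed) and `X ⊆ V(H)`: the induced subgraph `H[X]` is
a (possibly empty) union of connected components of `H` (no edge of `H` joins `X`
to `V(H) ∖ X`) iff `D_H` decomposes as a direct sum `D₁ ⊕ D₂` where `D₁` has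
ground set `X` and `D₂` has ground set `V(H) ∖ X`. -/
theorem union_of_components_iff_summand (A : Matrix V V (ZMod 2)) (hA : A.IsSymm)
    (X : Finset V) :
    (∀ x ∈ X, ∀ y ∉ X, A x y = 0) ↔
    ∃ D₁ D₂ : SetSystem V, D₁.ground = X ∧ D₂.ground = Finset.univ \ X ∧
      (∀ Z ∈ D₁.sets, Z ⊆ D₁.ground) ∧ (∀ Z ∈ D₂.sets, Z ⊆ D₂.ground) ∧
      DM A = D₁.directSum D₂ := by
  constructor
  · intro h0
    refine ⟨⟨X, {Z | Z ⊆ X ∧ PrincInv A Z}⟩,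
      ⟨Finset.univ \ X, {Z | Z ⊆ Finset.univ \ X ∧ PrincInv A Z}⟩, rfl, rfl,
      fun Z hZ => hZ.1, fun Z hZ => hZ.1, ?_⟩
    have key := princ_split A hA X h0
    unfold DM SetSystem.directSum
    congr 1
    · exact (Finset.union_sdiff_of_subset (Finset.subset_univ X)).symm
    · ext Z
      simp only [Set.mem_setOf_eq]
      constructor
      · intro hZ
        refine ⟨Z ∩ X, ⟨Finset.inter_subset_right, ((key Z).mp hZ).1⟩,
          Z \ X, ⟨Finset.sdiff_subset_sdiff (Finset.subset_univ Z) le_rfl,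
            ((key Z).mp hZ).2⟩, ?_⟩
        rw [Finset.union_comm, Finset.sdiff_union_inter]
      · rintro ⟨Y₁, ⟨hY₁X, hY₁⟩, Y₂, ⟨hY₂X, hY₂⟩, rfl⟩
        have hY₂X' : ∀ a ∈ Y₂, a ∉ X := fun a ha =>
          (Finset.mem_sdiff.mp (hY₂X ha)).2
        have h1 : (Y₁ ∪ Y₂) ∩ X = Y₁ := by
          ext a
          simp only [Finset.mem_inter, Finset.mem_union]
          constructor
          · rintro ⟨h | h, haX⟩
            · exact h
            · exact absurd haX (hY₂X' a h)
          · intro h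
            exact ⟨Or.inl h, hY₁X h⟩
        have h2 : (Y₁ ∪ Y₂) \ X = Y₂ := by
          ext a
          simp only [Finset.mem_sdiff, Finset.mem_union]
          constructor
          · rintro ⟨h | h, haX⟩
            · exact absurd (hY₁X h) haX
            · exact h
          · intro h
            exact ⟨Or.inr h, hY₂X' a h⟩
        exact (key _).mpr ⟨by rw [h1]; exact hY₁, by rw [h2]; exact hY₂⟩
  · rintro ⟨D₁, D₂, hg1, hg2, hs1, hs2, hDM⟩
    intro x hx y hy
    by_contra hxy0
    have hxyV : x ≠ y := fun h => hy (h ▸ hx)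
    have hxy : A x y = 1 := zmod2_ne_zero _ hxy0
    have hyx : A y x = 1 := by
      have : A y x = A x y := by
        calc A y x = A.transpose x y := rfl
          _ = A x y := by rw [hA]
      rw [this, hxy]
    have hsets : ∀ Z : Finset V, PrincInv A Z ↔
        ∃ Y₁ ∈ D₁.sets, ∃ Y₂ ∈ D₂.sets, Z = Y₁ ∪ Y₂ := by
      intro Z
      have : (DM A).sets = (D₁.directSum D₂).sets := by rw [hDM]
      constructor
      · intro h
        have : Z ∈ (D₁.directSum D₂).sets := this ▸ h
        exact this
      · intro h
        have : Z ∈ (DM A).sets := this ▸ h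
        exact this
    -- empty set is in both
    obtain ⟨E₁, hE₁, E₂, hE₂, hE⟩ := (hsets ∅).mp (princ_empty A)
    have hE₁' : E₁ = ∅ := Finset.subset_empty.mp (hE ▸ Finset.subset_union_left)
    have hE₂' : E₂ = ∅ := Finset.subset_empty.mp (hE ▸ Finset.subset_union_right)
    have hemp1 : (∅ : Finset V) ∈ D₁.sets := hE₁' ▸ hE₁
    have hemp2 : (∅ : Finset V) ∈ D₂.sets := hE₂' ▸ hE₂
    -- transfer for singletons
    have hx1 : PrincInv A {x} → {x} ∈ D₁.sets := by
      intro h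
      obtain ⟨Y₁, hY₁, Y₂, hY₂, hU⟩ := (hsets {x}).mp h
      have hY₂e : Y₂ = ∅ := by
        rw [Finset.eq_empty_iff_forall_notMem]
        intro a ha
        have haX : a ∉ X := (Finset.mem_sdiff.mp (hg2 ▸ hs2 Y₂ hY₂ ha)).2
        have : a ∈ ({x} : Finset V) := hU ▸ Finset.mem_union_right _ ha
        rw [Finset.mem_singleton.mp this] at haX
        exact haX hx
      rw [hY₂e, Finset.union_empty] at hU
      exact hU ▸ hY₁
    have hy2 : PrincInv A {y} → {y} ∈ D₂.sets := by
      intro h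
      obtain ⟨Y₁, hY₁, Y₂, hY₂, hU⟩ := (hsets {y}).mp h
      have hY₁e : Y₁ = ∅ := by
        rw [Finset.eq_empty_iff_forall_notMem]
        intro a ha
        have haX : a ∈ X := hg1 ▸ hs1 Y₁ hY₁ ha
        have : a ∈ ({y} : Finset V) := hU ▸ Finset.mem_union_left _ ha
        rw [Finset.mem_singleton.mp this] at haX
        exact hy haX
      rw [hY₁e, Finset.empty_union] at hU
      exact hU ▸ hY₂
    have hx1' : {x} ∈ D₁.sets → PrincInv A {x} := fun h =>
      (hsets {x}).mpr ⟨{x}, h, ∅, hemp2, (Finset.union_empty _).symm⟩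
    have hy2' : {y} ∈ D₂.sets → PrincInv A {y} := fun h =>
      (hsets {y}).mpr ⟨∅, hemp1, {y}, h, (Finset.empty_union _).symm⟩
    -- pair transfer
    have hpair : PrincInv A {x, y} → PrincInv A {x} ∧ PrincInv A {y} := by
      intro h
      obtain ⟨Y₁, hY₁, Y₂, hY₂, hU⟩ := (hsets {x, y}).mp h
      have hY₁X : ∀ a ∈ Y₁, a ∈ X := fun a ha => hg1 ▸ hs1 Y₁ hY₁ ha
      have hY₂X : ∀ a ∈ Y₂, a ∉ X := fun a ha =>
        (Finset.mem_sdiff.mp (hg2 ▸ hs2 Y₂ hY₂ ha)).2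
      have hY₁e : Y₁ = {x} := by
        ext a
        simp only [Finset.mem_singleton]
        constructor
        · intro ha
          have : a ∈ ({x, y} : Finset V) := hU ▸ Finset.mem_union_left _ ha
          rcases Finset.mem_insert.mp this with h' | h'
          · exact h'
          · exact absurd (hY₁X a ha) (Finset.mem_singleton.mp h' ▸ hy)
        · intro ha
          subst ha
          have : a ∈ Y₁ ∪ Y₂ := hU ▸ Finset.mem_insert_self a {y}
          rcases Finset.mem_union.mp this with h' | h'
          · exact h'
          · exact absurd hx (hY₂X a h')
      have hY₂e : Y₂ = {y} := by
        ext a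
        simp only [Finset.mem_singleton]
        constructor
        · intro ha
          have : a ∈ ({x, y} : Finset V) := hU ▸ Finset.mem_union_right _ ha
          rcases Finset.mem_insert.mp this with h' | h'
          · exact absurd (h' ▸ hx) (hY₂X a ha)
          · exact Finset.mem_singleton.mp h'
        · intro ha
          subst ha
          have : a ∈ Y₁ ∪ Y₂ := hU ▸ (by simp : a ∈ ({x, a} : Finset V))
          rcases Finset.mem_union.mp this with h' | h'
          · exact absurd (hY₁X a h') hy
          · exact h'
      exact ⟨hx1' (hY₁e ▸ hY₁), hy2' (hY₂e ▸ hY₂)⟩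
    have hpair' : PrincInv A {x} → PrincInv A {y} → PrincInv A {x, y} :=
      fun h1 h2 => (hsets {x, y}).mpr ⟨{x}, hx1 h1, {y}, hy2 h2, rfl⟩
    -- now case analysis on the diagonal entries
    by_cases hd : A x x = 1 ∧ A y y = 1
    · have h1 : PrincInv A {x} := (princ_singleton A x).mpr hd.1
      have h2 : PrincInv A {y} := (princ_singleton A y).mpr hd.2
      have := (princ_pair A x y hxyV).mp (hpair' h1 h2)
      rw [hd.1, hd.2, hxy, hyx] at this
      exact absurd ((zmod2_unit_iff _).mp this) (by decide)
    · have hdet : IsUnit (A x x * A y y - A x y * A y x) := by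
        rw [hxy, hyx]
        have h00 : A x x * A y y = 0 := by
          rcases not_and_or.mp hd with h | h
          · rw [zmod2_ne_one _ h, zero_mul]
          · rw [zmod2_ne_one _ h, mul_zero]
        rw [h00, zmod2_unit_iff]
        decide
      have hp := hpair ((princ_pair A x y hxyV).mpr hdet)
      exact hd ⟨(princ_singleton A x).mp hp.1, (princ_singleton A y).mp hp.2⟩
end

section
/- Let D = D_H be the binary normal delta-matroid of a graph H (loops allowed). Then there exists a sequence (v₁,…,v_k) of mutually distinct elements such that {v₁,…,v_i} ∈ S for all 0 ≤ i ≤ k and {v₁,…,v_k} is a maximal member of S, if and only if every even connected summand of D with nonempty ground set is of the form ({v}, {∅}) for some single element v. -/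
open Matrix

variable {V : Type*} [Fintype V] [DecidableEq V] {U : Type*} [DecidableEq U]

/-- `D'` is a summand of `D`: `D = D' ⊕ D''` for some set system `D''` with ground
set disjoint from that of `D'` (members of each summand lying in its ground set). -/
def SetSystem.Summand (D' D : SetSystem U) : Prop :=
  ∃ D'' : SetSystem U, Disjoint D'.ground D''.ground ∧
    (∀ Z ∈ D'.sets, Z ⊆ D'.ground) ∧ (∀ Z ∈ D''.sets, Z ⊆ D''.ground) ∧
    D = D'.directSum D''

/-- A set system is even if all its members have cardinalities of equal parity. -/
def SetSystem.IsEven (D : SetSystem U) : Prop :=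
  ∀ X ∈ D.sets, ∀ Y ∈ D.sets, (Even X.card ↔ Even Y.card)

/-- A set system is connected if it is not the direct sum of two set systems with
nonempty (disjoint) ground sets. -/
def SetSystem.IsConnected (D : SetSystem U) : Prop :=
  ¬ ∃ D₁ D₂ : SetSystem U, D₁.ground.Nonempty ∧ D₂.ground.Nonempty ∧
      Disjoint D₁.ground D₂.ground ∧
      (∀ Z ∈ D₁.sets, Z ⊆ D₁.ground) ∧ (∀ Z ∈ D₂.sets, Z ⊆ D₂.ground) ∧
      D = D₁.directSum D₂

/-!
If `A v v = 1`, then `insert v X` is feasible for `A` exactly when `X` is feasible for the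
Schur complement `pivot A v`, so `v` followed by a full lc-sequence of `pivot A v` is a full
lc-sequence of `A`. Pivoting greedily on loops reaches the zero matrix, where `[]` is full, as
long as every edge of the graph stays in reach of a loop; this invariant survives if we always
pivot on the loop that leaves the most loops behind.

A loopless component of `H` containing an edge would be an even connected summand of `D_H` with
at least two elements, so the right-hand side gives the invariant. Conversely, the trace of the
prefixes of a full lc-sequence on an even summand grows by at most one element at a time while
staying even, hence is empty; by maximality the summand then has no member but `∅`.
-/

open Finset Relation

attribute [ext] SetSystem

theorem List.toFinset_inter_eq_empty_of_even_card {σ : List U} {g : Finset U}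
    (h : ∀ i ≤ σ.length, Even ((σ.take i).toFinset ∩ g).card) : σ.toFinset ∩ g = ∅ := by
  suffices ∀ i ≤ σ.length, (σ.take i).toFinset ∩ g = ∅ by
    simpa using this σ.length le_rfl
  intro i
  induction i with
  | zero => simp
  | succ i ih =>
    intro hi
    have hsub : (σ.take (i + 1)).toFinset ∩ g ⊆ {σ[i]} := by
      intro a ha
      have hprev : a ∉ (σ.take i).toFinset ∩ g := by rw [ih (by omega)]; exact notMem_empty a
      rw [List.take_add_one, List.getElem?_eq_getElem (by omega), List.toFinset_append,
        union_inter_distrib_right, mem_union] at ha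
      rcases ha with ha | ha
      · exact absurd ha hprev
      · simpa using (mem_inter.1 ha).1
    rcases Finset.subset_singleton_iff.1 hsub with h0 | h1
    · exact h0
    · have := h (i + 1) hi
      rw [h1, card_singleton] at this
      exact absurd this (by decide)

namespace SetSystem

def IsFullLcSeq (D : SetSystem U) (σ : List U) : Prop :=
  σ.Nodup ∧ (∀ i ≤ σ.length, (σ.take i).toFinset ∈ D.sets) ∧ σ.toFinset ∈ D.sets ∧
    ∀ Y ∈ D.sets, σ.toFinset ⊆ Y → Y = σ.toFinset

section DirectSum

variable {D₁ D₂ : SetSystem U}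

theorem mem_directSum_sets_iff (hdisj : Disjoint D₁.ground D₂.ground)
    (h₁ : ∀ Z ∈ D₁.sets, Z ⊆ D₁.ground) (h₂ : ∀ Z ∈ D₂.sets, Z ⊆ D₂.ground) {X : Finset U} :
    X ∈ (D₁.directSum D₂).sets ↔
      X ⊆ D₁.ground ∪ D₂.ground ∧ X ∩ D₁.ground ∈ D₁.sets ∧ X ∩ D₂.ground ∈ D₂.sets := by
  constructor
  · rintro ⟨X₁, hX₁, X₂, hX₂, rfl⟩
    have e₁ : (X₁ ∪ X₂) ∩ D₁.ground = X₁ := by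
      rw [union_inter_distrib_right, inter_eq_left.2 (h₁ _ hX₁), disjoint_iff_inter_eq_empty.1
        (disjoint_of_subset_left (h₂ _ hX₂) hdisj.symm), union_empty]
    have e₂ : (X₁ ∪ X₂) ∩ D₂.ground = X₂ := by
      rw [union_inter_distrib_right, inter_eq_left.2 (h₂ _ hX₂), disjoint_iff_inter_eq_empty.1
        (disjoint_of_subset_left (h₁ _ hX₁) hdisj), empty_union]
    exact ⟨union_subset_union (h₁ _ hX₁) (h₂ _ hX₂), by rwa [e₁], by rwa [e₂]⟩
  · rintro ⟨hX, hX₁, hX₂⟩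
    exact ⟨_, hX₁, _, hX₂, by rw [← inter_union_distrib_left, inter_eq_left.2 hX]⟩

theorem singleton_mem_directSum_of_pair_mem (hdisj : Disjoint D₁.ground D₂.ground)
    (h₁ : ∀ Z ∈ D₁.sets, Z ⊆ D₁.ground) (h₂ : ∀ Z ∈ D₂.sets, Z ⊆ D₂.ground) {u w : U}
    (hempty : ∅ ∈ (D₁.directSum D₂).sets)
    (hpair : {u, w} ∈ (D₁.directSum D₂).sets) (hu : u ∈ D₁.ground) (hw : w ∉ D₁.ground) :
    {u} ∈ (D₁.directSum D₂).sets := by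
  rw [mem_directSum_sets_iff hdisj h₁ h₂] at hempty hpair ⊢
  have hu₂ : u ∉ D₂.ground := disjoint_left.1 hdisj hu
  refine ⟨singleton_subset_iff.2 (mem_union_left _ hu), ?_, ?_⟩
  · convert hpair.2.1 using 1
    ext a
    simp only [mem_inter, mem_singleton, mem_insert]
    grind
  · convert hempty.2.2 using 1
    ext a
    simp only [mem_inter, mem_singleton, notMem_empty]
    grind

end DirectSum

theorem IsFullLcSeq.sets_eq_singleton_empty {D D' : SetSystem U} {σ : List U}
    (hσ : D.IsFullLcSeq σ) (hD' : D'.Summand D) (heven : D'.IsEven) : D'.sets = {∅} := by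
  obtain ⟨-, hprefix, hfull, hmax⟩ := hσ
  obtain ⟨D'', hdisj, h', h'', rfl⟩ := hD'
  have hmem := fun X => mem_directSum_sets_iff (X := X) hdisj h' h''
  have hempty : ∅ ∈ D'.sets := by simpa using ((hmem _).1 (hprefix 0 (Nat.zero_le _))).2.1
  have hσD' : σ.toFinset ∩ D'.ground = ∅ :=
    List.toFinset_inter_eq_empty_of_even_card fun i hi =>
      (heven _ ((hmem _).1 (hprefix i hi)).2.1 ∅ hempty).2 (by simp)
  refine Set.eq_singleton_iff_unique_mem.2 ⟨hempty, fun T hT => ?_⟩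
  have hTD' : T ⊆ D'.ground := h' T hT
  have hσT : σ.toFinset ∪ T ∈ (D'.directSum D'').sets := by
    obtain ⟨hσsub, -, hσD''⟩ := (hmem _).1 hfull
    refine (hmem _).2 ⟨union_subset hσsub (hTD'.trans subset_union_left), ?_, ?_⟩
    · rwa [union_inter_distrib_right, hσD', empty_union, inter_eq_left.2 hTD']
    · rwa [union_inter_distrib_right,
        disjoint_iff_inter_eq_empty.1 (disjoint_of_subset_left hTD' hdisj), union_empty]
  have hTσ : T ⊆ σ.toFinset := hmax _ hσT subset_union_left ▸ subset_union_right
  exact subset_empty.1 (hσD' ▸ subset_inter hTσ hTD')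

theorem IsConnected.ground_eq_singleton {D : SetSystem U} (hD : D.IsConnected)
    (hsets : D.sets = {∅}) {v : U} (hv : v ∈ D.ground) : D.ground = {v} := by
  by_contra hne
  obtain ⟨w, hw, hwv⟩ : ∃ w ∈ D.ground, w ≠ v := by
    by_contra! h
    exact hne (eq_singleton_iff_unique_mem.2 ⟨hv, h⟩)
  refine hD ⟨⟨{v}, {∅}⟩, ⟨D.ground.erase v, {∅}⟩, singleton_nonempty v,
    ⟨w, mem_erase.2 ⟨hwv, hw⟩⟩, by simp, by simp, by simp, SetSystem.ext ?_ ?_⟩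
  · exact (insert_erase hv).symm
  · simp [directSum, hsets]

end SetSystem

theorem zmod2_ne_one_iff {a : ZMod 2} : a ≠ 1 ↔ a = 0 := by revert a; decide

theorem zmod2_ne_zero_iff {a : ZMod 2} : a ≠ 0 ↔ a = 1 := by revert a; decide

theorem zmod2_mul_self (a : ZMod 2) : a * a = a := by revert a; decide

theorem zmod2_isUnit_iff {a : ZMod 2} : IsUnit a ↔ a = 1 := by
  rw [isUnit_iff_ne_zero, zmod2_ne_zero_iff]

theorem det_eq_zero_of_isSymm_of_odd {n : Type*} [Fintype n] [DecidableEq n]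
    {M : Matrix n n (ZMod 2)} (hM : M.IsSymm) (hdiag : ∀ i, M i i = 0)
    (hodd : Odd (Fintype.card n)) : M.det = 0 := by
  have hsign : ∀ σ : Equiv.Perm n, Equiv.Perm.sign σ • ∏ i, M (σ i) i = ∏ i, M (σ i) i := by
    intro σ
    rcases Int.units_eq_one_or (Equiv.Perm.sign σ) with h | h <;> simp [h]
  rw [det_apply]
  simp_rw [hsign]
  -- `σ ↦ σ⁻¹` pairs off equal terms; a self-paired `σ` is an involution of an odd set, hence
  -- has a fixed point and picks up a zero diagonal entry.
  refine sum_ninvolution (fun σ => σ⁻¹) (fun σ => ?_) (fun σ hσ hinv => hσ ?_)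
    (fun _ => mem_univ _) inv_inv
  · rw [← Equiv.prod_comp σ (fun i => M (σ⁻¹ i) i)]
    simp [hM.apply, CharTwo.add_self_eq_zero]
  · obtain ⟨a, ha⟩ := Equiv.Perm.exists_fixed_point_of_prime (p := 2) (n := 1) (σ := σ)
      (by rwa [← even_iff_two_dvd, Nat.not_even_iff_odd])
      (by rw [pow_one, sq]; nth_rw 1 [← hinv]; exact inv_mul_cancel σ)
    exact prod_eq_zero (mem_univ a) (by rw [ha, hdiag])

section PrincInv

variable {n : Type*} [DecidableEq n] {A : Matrix n n (ZMod 2)}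

theorem princInv_empty (A : Matrix n n (ZMod 2)) : PrincInv A ∅ := by
  simp [PrincInv]

theorem princInv_singleton_iff {u : n} : PrincInv A {u} ↔ A u u = 1 := by
  rw [PrincInv, det_unique, zmod2_isUnit_iff]
  rfl

theorem not_princInv_of_row_eq_zero {X : Finset n} {x : n} (hx : x ∈ X) (h : ∀ y, A x y = 0) :
    ¬ PrincInv A X := by
  have : (A.submatrix ((↑) : X → n) (↑)).det = 0 :=
    det_eq_zero_of_row_eq_zero ⟨x, hx⟩ fun j => h j
  rw [PrincInv, this]
  exact not_isUnit_zero

theorem princInv_pair {u w : n} (huw : u ≠ w) (hu : A u u = 0) (hw : A w w = 0)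
    (huw₁ : A u w = 1) (hwu₁ : A w u = 1) : PrincInv A {u, w} := by
  let e : Fin 2 ≃ ({u, w} : Finset n) := Equiv.ofBijective ![⟨u, by simp⟩, ⟨w, by simp⟩]
    ((Fintype.bijective_iff_injective_and_card _).2
      ⟨fun i j => by fin_cases i <;> fin_cases j <;> simp [huw, huw.symm],
        by rw [Fintype.card_fin, Fintype.card_coe, card_pair huw]⟩)
  rw [PrincInv, ← det_submatrix_equiv_self e, det_fin_two]
  simp [e, hu, hw, huw₁, hwu₁]

theorem even_card_of_princInv (hA : A.IsSymm) {X : Finset n} (hX : ∀ x ∈ X, A x x = 0)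
    (h : PrincInv A X) : Even X.card := by
  by_contra hodd
  rw [PrincInv, det_eq_zero_of_isSymm_of_odd (hA.submatrix _) (fun i => hX _ i.2)
    (by simpa using hodd)] at h
  exact not_isUnit_zero h

theorem princInv_iff_of_separated {C : Finset n}
    (hsep : ∀ z ∈ C, ∀ w ∉ C, A z w = 0 ∧ A w z = 0) (X : Finset n) :
    PrincInv A X ↔ PrincInv A (X ∩ C) ∧ PrincInv A (X \ C) := by
  have hdisj : Disjoint (X ∩ C) (X \ C) :=
    disjoint_of_subset_left inter_subset_right disjoint_sdiff
  let e : (X ∩ C : Finset n) ⊕ (X \ C : Finset n) ≃ X := (Equiv.Finset.union _ _ hdisj).trans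
    (Equiv.subtypeEquivRight fun x => by simp only [mem_union, mem_inter, mem_sdiff]; tauto)
  have hblocks : (A.submatrix ((↑) : X → n) (↑)).submatrix e e =
      fromBlocks (A.submatrix (↑) (↑)) 0 0 (A.submatrix (↑) (↑)) := by
    ext (⟨i, hi⟩ | ⟨i, hi⟩) (⟨j, hj⟩ | ⟨j, hj⟩)
    · rfl
    · exact (hsep i (mem_inter.1 hi).2 j (mem_sdiff.1 hj).2).1
    · exact (hsep j (mem_inter.1 hj).2 i (mem_sdiff.1 hi).2).2
    · rfl
  rw [PrincInv, ← det_submatrix_equiv_self e, hblocks, det_fromBlocks_zero₂₁, IsUnit.mul_iff]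
  rfl

end PrincInv

section Pivot

variable {n : Type*} {A : Matrix n n (ZMod 2)} {v : n}

/-- For `A v v = 1` this is the Schur complement of the entry `A v v`, written as an
`n × n` matrix: row and column `v` become zero. -/
def pivot (A : Matrix n n (ZMod 2)) (v : n) : Matrix n n (ZMod 2) :=
  fun x y => A x y + A x v * A v y

theorem pivot_isSymm (hA : A.IsSymm) (v : n) : (pivot A v).IsSymm := by
  ext x y
  simp only [pivot, transpose_apply, hA.apply x y, hA.apply x v, hA.apply v y]
  ring

theorem pivot_apply_self (hA : A.IsSymm) (z : n) : pivot A v z z = A z z + A z v := by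
  rw [pivot, ← hA.apply v z, zmod2_mul_self]

theorem pivot_self_apply (hv : A v v = 1) (y : n) : pivot A v v y = 0 := by
  simp only [pivot, hv, one_mul, CharTwo.add_self_eq_zero]

theorem pivot_apply_of_eq_zero {x : n} (hx : A x v = 0) (y : n) : pivot A v x y = A x y := by
  simp [pivot, hx]

variable [DecidableEq n]

theorem det_submatrix_insert (hv : A v v = 1) {X : Finset n} (hvX : v ∉ X) :
    (A.submatrix ((↑) : ↥(insert v X) → n) (↑)).det =
      ((pivot A v).submatrix ((↑) : X → n) (↑)).det := by
  let e : Unit ⊕ X ≃ (insert v X : Finset n) :=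
    ((subtypeInsertEquivOption hvX).trans
      ((Equiv.optionEquivSumPUnit _).trans (Equiv.sumComm _ _))).symm
  have hblocks : (A.submatrix ((↑) : ↥(insert v X) → n) (↑)).submatrix e e =
      fromBlocks 1 (of fun _ (j : X) => A v j) (of fun (i : X) _ => A i v)
        (A.submatrix (↑) (↑)) := by
    ext (_ | i) (_ | j) <;> simp [e, subtypeInsertEquivOption, hv]
  rw [← det_submatrix_equiv_self e, hblocks, det_fromBlocks_one₁₁]
  congr 1
  ext i j
  simp [pivot, mul_apply, CharTwo.sub_eq_add]

theorem princInv_insert_iff (hv : A v v = 1) {X : Finset n} (hvX : v ∉ X) :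
    PrincInv A (insert v X) ↔ PrincInv (pivot A v) X :=
  Iff.of_eq (congrArg IsUnit (det_submatrix_insert hv hvX))

end Pivot

section Graph

variable {n : Type*} {A : Matrix n n (ZMod 2)}

def graphAdj (A : Matrix n n (ZMod 2)) (x y : n) : Prop := x ≠ y ∧ A x y = 1

theorem graphAdj_symm (hA : A.IsSymm) {x y : n} (h : graphAdj A x y) : graphAdj A y x :=
  ⟨h.1.symm, hA.apply x y ▸ h.2⟩

def EdgesReachLoops (A : Matrix n n (ZMod 2)) : Prop :=
  ∀ ⦃x y⦄, graphAdj A x y → ∃ z, ReflTransGen (graphAdj A) x z ∧ A z z = 1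

theorem EdgesReachLoops.eq_zero (hA : EdgesReachLoops A) (hloops : ∀ z, A z z ≠ 1) : A = 0 := by
  ext x y
  by_cases hxy : x = y
  · exact hxy ▸ zmod2_ne_one_iff.1 (hloops x)
  · refine zmod2_ne_one_iff.1 fun h => ?_
    obtain ⟨z, -, hz⟩ := hA ⟨hxy, h⟩
    exact hloops z hz

variable [Fintype n] {v : n}

def loops (A : Matrix n n (ZMod 2)) : Finset n := {z | A z z = 1}

theorem mem_loops {z : n} : z ∈ loops A ↔ A z z = 1 := by simp [loops]

theorem card_loops_pivot_lt (hA : A.IsSymm) {x y : n} (hxv : A x v = 1)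
    (hloops : ∀ z ∈ loops (pivot A v), pivot A v z x = 0)
    (hyx : pivot A v y x = 1) (hyy : pivot A v y y = 0) :
    (loops (pivot A v)).card < (loops (pivot A x)).card := by
  have hvx : A v x = 1 := hA.apply x v ▸ hxv
  refine card_lt_card ((ssubset_iff_of_subset fun z hz => ?_).2 ⟨y, ?_, ?_⟩)
  · have hzx := hloops z hz
    rw [mem_loops, pivot_apply_self hA] at hz ⊢
    rw [pivot, hvx, mul_one] at hzx
    grind
  · rw [pivot, hvx, mul_one] at hyx
    rw [pivot_apply_self hA] at hyy
    rw [mem_loops, pivot_apply_self hA]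
    grind
  · rw [mem_loops, hyy]
    exact zero_ne_one

theorem edgesReachLoops_pivot (hA : A.IsSymm) (hgood : EdgesReachLoops A)
    (hmax : ∀ u ∈ loops A, (loops (pivot A u)).card ≤ (loops (pivot A v)).card) :
    EdgesReachLoops (pivot A v) := by
  set B := pivot A v with hBdef
  have hB : B.IsSymm := pivot_isSymm hA v
  intro x y hxy
  by_contra! hno
  -- If the loopless `B`-component of `x` meets a neighbour `x'` of `v`, then `x'` is a loop of
  -- `A` and pivoting on it would leave more loops; otherwise it is also an `A`-component.
  by_cases hnbr : ∃ x', ReflTransGen (graphAdj B) x x' ∧ A x' v = 1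
  · obtain ⟨x', hx', hx'v⟩ := hnbr
    obtain ⟨y', hy'x', hy'⟩ : ∃ y', graphAdj B y' x' ∧ ReflTransGen (graphAdj B) x y' := by
      rcases ReflTransGen.cases_tail hx' with rfl | ⟨c, hc, hcx'⟩
      · exact ⟨y, graphAdj_symm hB hxy, .single hxy⟩
      · exact ⟨c, hcx', hc⟩
    have hx'loop : x' ∈ loops A := by
      have := zmod2_ne_one_iff.1 (hno x' hx')
      rw [hBdef, pivot_apply_self hA, hx'v] at this
      rw [mem_loops]
      grind
    refine (hmax x' hx'loop).not_gt (card_loops_pivot_lt hA hx'v (fun z hz => ?_) hy'x'.2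
      (zmod2_ne_one_iff.1 (hno y' hy')))
    refine zmod2_ne_one_iff.1 fun hzx' =>
      hno z (hx'.tail ⟨?_, hB.apply z x' ▸ hzx'⟩) (mem_loops.1 hz)
    rintro rfl
    exact hno x' hx' (mem_loops.1 hz)
  · push Not at hnbr
    have hrow : ∀ z, ReflTransGen (graphAdj B) x z → ∀ w, B z w = A z w := fun z hz =>
      pivot_apply_of_eq_zero (zmod2_ne_one_iff.1 (hnbr z hz))
    have hreach : ∀ z, ReflTransGen (graphAdj A) x z → ReflTransGen (graphAdj B) x z := by
      intro z hz
      induction hz with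
      | refl => exact .refl
      | tail _ hzw ih => exact ih.tail ⟨hzw.1, (hrow _ ih _).trans hzw.2⟩
    obtain ⟨z, hz, hzz⟩ := hgood ⟨hxy.1, (hrow x .refl y).symm.trans hxy.2⟩
    exact hno z (hreach z hz) ((hrow z (hreach z hz) z).trans hzz)

end Graph

section Chain

variable {A : Matrix V V (ZMod 2)} {v : V}

theorem isFullLcSeq_nil_zero : (DM (0 : Matrix V V (ZMod 2))).IsFullLcSeq [] := by
  refine ⟨List.nodup_nil, fun i hi => ?_, princInv_empty _, fun Y hY _ => ?_⟩
  · rw [Nat.le_zero.1 hi]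
    exact princInv_empty _
  · by_contra hne
    obtain ⟨y, hy⟩ := nonempty_iff_ne_empty.2 (by simpa using hne)
    exact not_princInv_of_row_eq_zero hy (fun _ => rfl) hY

theorem SetSystem.IsFullLcSeq.cons_pivot (hv : A v v = 1) {σ : List V}
    (hσ : (DM (pivot A v)).IsFullLcSeq σ) : (DM A).IsFullLcSeq (v :: σ) := by
  obtain ⟨hnd, hprefix, hfull, hmax⟩ := hσ
  have hvσ : v ∉ σ.toFinset := fun hv' =>
    not_princInv_of_row_eq_zero hv' (pivot_self_apply hv) hfull
  refine ⟨List.nodup_cons.2 ⟨by simpa using hvσ, hnd⟩, ?_, ?_, fun Y hY hσY => ?_⟩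
  · rintro (_ | i) hi
    · exact princInv_empty A
    · rw [List.take_succ_cons, List.toFinset_cons]
      have hvi : v ∉ (σ.take i).toFinset := fun h =>
        hvσ (List.mem_toFinset.2 (List.mem_of_mem_take (List.mem_toFinset.1 h)))
      exact (princInv_insert_iff hv hvi).2 (hprefix i (by simpa using hi))
  · rw [List.toFinset_cons]
    exact (princInv_insert_iff hv hvσ).2 hfull
  · have hvY : v ∈ Y := hσY (by simp)
    have hY' : PrincInv (pivot A v) (Y.erase v) :=
      (princInv_insert_iff hv (notMem_erase v Y)).1 (by rwa [insert_erase hvY])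
    have hσY' : σ.toFinset ⊆ Y.erase v := fun a ha =>
      mem_erase.2 ⟨fun h => hvσ (h ▸ ha), hσY (by simp [ha])⟩
    rw [List.toFinset_cons, ← hmax _ hY' hσY', insert_erase hvY]

theorem exists_isFullLcSeq_of_edgesReachLoops (hA : A.IsSymm) (hgood : EdgesReachLoops A) :
    ∃ σ, (DM A).IsFullLcSeq σ := by
  suffices ∀ S : Finset V, (∀ x ∉ S, ∀ y, A x y = 0) → ∃ σ, (DM A).IsFullLcSeq σ from
    this univ fun x hx => absurd (mem_univ x) hx
  intro S hS
  induction S using Finset.strongInduction generalizing A with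
  | H S ih =>
  rcases (loops A).eq_empty_or_nonempty with hnone | hsome
  · rw [hgood.eq_zero fun z hz => by simp [← mem_loops, hnone] at hz]
    exact ⟨[], isFullLcSeq_nil_zero⟩
  · obtain ⟨v, hv, hmax⟩ := exists_max_image _ (fun u => (loops (pivot A u)).card) hsome
    have hv := mem_loops.1 hv
    have hvS : v ∈ S := by_contra fun h => one_ne_zero (hv ▸ hS v h v)
    have hS' : ∀ x ∉ S.erase v, ∀ y, pivot A v x y = 0 := by
      intro x hx y
      rcases eq_or_ne x v with rfl | hxv
      · exact pivot_self_apply hv y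
      · have hxS : x ∉ S := fun h => hx (mem_erase.2 ⟨hxv, h⟩)
        rw [pivot_apply_of_eq_zero (hS x hxS v), hS x hxS]
    obtain ⟨σ, hσ⟩ := ih _ (erase_ssubset hvS) (pivot_isSymm hA v)
      (edgesReachLoops_pivot hA hgood hmax) hS'
    exact ⟨v :: σ, hσ.cons_pivot hv⟩

end Chain

section Components

variable {n : Type*} [DecidableEq n] {A : Matrix n n (ZMod 2)}

def restrictDM (A : Matrix n n (ZMod 2)) (C : Finset n) : SetSystem n :=
  ⟨C, {X | X ⊆ C ∧ PrincInv A X}⟩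

theorem subset_of_mem_restrictDM {C : Finset n} :
    ∀ X ∈ (restrictDM A C).sets, X ⊆ (restrictDM A C).ground := fun _ h => h.1

theorem restrictDM_summand [Fintype n] {C : Finset n}
    (hsep : ∀ z ∈ C, ∀ w ∉ C, A z w = 0 ∧ A w z = 0) : (restrictDM A C).Summand (DM A) := by
  refine ⟨restrictDM A Cᶜ, disjoint_compl_right, subset_of_mem_restrictDM,
    subset_of_mem_restrictDM, SetSystem.ext (union_compl C).symm ?_⟩
  ext X
  rw [SetSystem.mem_directSum_sets_iff disjoint_compl_right subset_of_mem_restrictDM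
    subset_of_mem_restrictDM]
  simp [restrictDM, DM, princInv_iff_of_separated hsep X, sdiff_eq_inter_compl]

theorem restrictDM_isEven (hA : A.IsSymm) {C : Finset n} (hloop : ∀ z ∈ C, A z z = 0) :
    (restrictDM A C).IsEven := fun _ hX _ hY =>
  iff_of_true (even_card_of_princInv hA (fun x hx => hloop x (hX.1 hx)) hX.2)
    (even_card_of_princInv hA (fun y hy => hloop y (hY.1 hy)) hY.2)

theorem restrictDM_isConnected (hA : A.IsSymm) {x : n} {C : Finset n}
    (hC : ∀ z, z ∈ C ↔ ReflTransGen (graphAdj A) x z) (hloop : ∀ z ∈ C, A z z = 0) :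
    (restrictDM A C).IsConnected := by
  rintro ⟨E₁, E₂, ⟨a, ha⟩, ⟨b, hb⟩, hdisj, h₁, h₂, hE⟩
  have hground : C = E₁.ground ∪ E₂.ground := congrArg SetSystem.ground hE
  have hsets : ∀ X, X ⊆ C ∧ PrincInv A X ↔ X ∈ (E₁.directSum E₂).sets := fun X => by
    rw [← hE]; rfl
  have hsingleton : ∀ z ∈ C, {z} ∉ (E₁.directSum E₂).sets := fun z hz h => by
    have := princInv_singleton_iff.1 ((hsets _).2 h).2
    rw [hloop z hz] at this
    exact zero_ne_one this
  -- A feasible pair `{z, w}` with infeasible singletons cannot be split by the direct sum.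
  have hside : ∀ z w, z ∈ C → graphAdj A z w → (z ∈ E₁.ground ↔ w ∈ E₁.ground) := by
    intro z w hz hzw
    have hw : w ∈ C := (hC w).2 (((hC z).1 hz).tail hzw)
    have hempty := (hsets ∅).1 ⟨empty_subset C, princInv_empty A⟩
    have hpair := (hsets {z, w}).1 ⟨insert_subset hz (singleton_subset_iff.2 hw),
      princInv_pair hzw.1 (hloop z hz) (hloop w hw) hzw.2 ((graphAdj_symm hA hzw).2)⟩
    by_cases hz₁ : z ∈ E₁.ground <;> by_cases hw₁ : w ∈ E₁.ground
    · exact iff_of_true hz₁ hw₁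
    · exact absurd (SetSystem.singleton_mem_directSum_of_pair_mem hdisj h₁ h₂ hempty hpair hz₁ hw₁)
        (hsingleton z hz)
    · exact absurd (SetSystem.singleton_mem_directSum_of_pair_mem hdisj h₁ h₂ hempty
        (pair_comm z w ▸ hpair) hw₁ hz₁) (hsingleton w hw)
    · exact iff_of_false hz₁ hw₁
  have hall : ∀ z, ReflTransGen (graphAdj A) x z → (z ∈ E₁.ground ↔ x ∈ E₁.ground) := by
    intro z hz
    induction hz with
    | refl => rfl
    | tail hxz hzw ih => exact (hside _ _ ((hC _).2 hxz) hzw).symm.trans ih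
  have hbC : b ∈ C := hground ▸ mem_union_right _ hb
  have haC : a ∈ C := hground ▸ mem_union_left _ ha
  exact disjoint_left.1 hdisj ((hall b ((hC b).1 hbC)).2 ((hall a ((hC a).1 haC)).1 ha)) hb

end Components

theorem edgesReachLoops_of_summands {A : Matrix V V (ZMod 2)} (hA : A.IsSymm)
    (h : ∀ D' : SetSystem V, D'.Summand (DM A) → D'.IsConnected → D'.IsEven →
      D'.ground.Nonempty → ∃ v : V, D'.ground = {v} ∧ D'.sets = {∅}) :
    EdgesReachLoops A := by
  classical
  intro x y hxy
  by_contra! hno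
  set C : Finset V := {z | ReflTransGen (graphAdj A) x z}
  have hC : ∀ z, z ∈ C ↔ ReflTransGen (graphAdj A) x z := by simp [C]
  have hloop : ∀ z ∈ C, A z z = 0 := fun z hz => zmod2_ne_one_iff.1 (hno z ((hC z).1 hz))
  have hsep : ∀ z ∈ C, ∀ w ∉ C, A z w = 0 ∧ A w z = 0 := by
    intro z hz w hw
    have hzw : A z w = 0 := zmod2_ne_one_iff.1 fun h =>
      hw ((hC w).2 (((hC z).1 hz).tail ⟨ne_of_mem_of_not_mem hz hw, h⟩))
    exact ⟨hzw, hA.apply w z ▸ hzw⟩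
  have hxC : x ∈ C := (hC x).2 .refl
  obtain ⟨v, hv, -⟩ := h _ (restrictDM_summand hsep) (restrictDM_isConnected hA hC hloop)
    (restrictDM_isEven hA hloop) ⟨x, hxC⟩
  have hx : x ∈ ({v} : Finset V) := hv ▸ hxC
  have hy : y ∈ ({v} : Finset V) := hv ▸ (hC y).2 (.single hxy)
  exact hxy.1 ((mem_singleton.1 hx).trans (mem_singleton.1 hy).symm)

/-- For the binary normal delta-matroid `D = D_H` of a graph `H` (loops allowed):
there exists a full lc-sequence for `D` (a sequence `(v₁,…,v_k)` of mutually
distinct elements all of whose initial segments `{v₁,…,v_i}` belong to `S`, with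
`{v₁,…,v_k}` a maximal member of `S`) iff every even connected summand of `D`
with nonempty ground set is of the form `({v}, {∅})`. -/
theorem full_lcSeq_iff_even_connected_summands (A : Matrix V V (ZMod 2))
    (hA : A.IsSymm) :
    (∃ σ : List V, σ.Nodup ∧ (∀ i ≤ σ.length, (σ.take i).toFinset ∈ (DM A).sets) ∧
      σ.toFinset ∈ (DM A).sets ∧
      ∀ Y ∈ (DM A).sets, σ.toFinset ⊆ Y → Y = σ.toFinset) ↔
    (∀ D' : SetSystem V, D'.Summand (DM A) → D'.IsConnected → D'.IsEven →
      D'.ground.Nonempty → ∃ v : V, D'.ground = {v} ∧ D'.sets = {∅}) := by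
  constructor
  · rintro ⟨σ, hσ⟩ D' hD' hconn heven ⟨v, hv⟩
    have hsets : D'.sets = {∅} := SetSystem.IsFullLcSeq.sets_eq_singleton_empty hσ hD' heven
    exact ⟨v, hconn.ground_eq_singleton hsets hv, hsets⟩
  · intro h
    exact exists_isFullLcSeq_of_edgesReachLoops hA (edgesReachLoops_of_summands hA h)
end
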